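/- For every natural number m ≥ 1 and all real numbers a and t such that sin(2m·a·t) ≠ 0, we have −2m·cot(2m·a·t) = Σ_{j=0}^{2m−1} tan(a·t + jπ/(2m)). (This is the λ → 0 limit of the degenerate tangent multiple angle formula; the hypothesis guarantees every summand is defined.) -/

import Mathlib

/-!
With `q = exp (2ix)` and `ζ` a primitive `n`-th root of unity, `cot (x + kπ/n)` equals
`i (ζᵏq + 1)/(ζᵏq - 1)`, and the `ζᵏq` are the roots of `Xⁿ - qⁿ`; evaluating the logarithmic
derivative of `Xⁿ - qⁿ` at `1` gives `∑_{k<n} cot (x + kπ/n) = n cot (nx)`. The tangent sum is this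
identity for `n = 2m` at `x = at + π/2`, because `tan u = -cot (u + π/2)` and `cot` has period `π`.
-/

open Real Polynomial Finset

theorem IsPrimitiveRoot.sum_one_div_sub_pow_mul {K : Type*} [Field K] {n : ℕ} {ζ : K}
    (hζ : IsPrimitiveRoot ζ n) {q x : K} (hx : x ^ n ≠ q ^ n) :
    ∑ k ∈ range n, 1 / (x - ζ ^ k * q) = n * x ^ (n - 1) / (x ^ n - q ^ n) := by
  have hf := X_pow_sub_C_splits_of_isPrimitiveRoot hζ (rfl : q ^ n = q ^ n)
  have h := hf.eval_derivative_div_eval_of_ne_zero (x := x) (by simpa [sub_eq_zero] using hx)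
  rw [← nthRoots, hζ.nthRoots_eq rfl, Multiset.map_map, derivative_sub, derivative_C, sub_zero,
    derivative_X_pow] at h
  simp only [eval_sub, eval_pow, eval_X, eval_C, eval_mul] at h
  exact h.symm

theorem IsPrimitiveRoot.sum_pow_mul_add_one_div_sub_one {K : Type*} [Field K] {n : ℕ} {ζ : K}
    (hζ : IsPrimitiveRoot ζ n) {q : K} (hq : q ^ n ≠ 1) :
    ∑ k ∈ range n, (ζ ^ k * q + 1) / (ζ ^ k * q - 1) = n * (q ^ n + 1) / (q ^ n - 1) := by
  have hsum := hζ.sum_one_div_sub_pow_mul (x := 1) (q := q) (by simpa [eq_comm] using hq)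
  have hterm (k : ℕ) : (ζ ^ k * q + 1) / (ζ ^ k * q - 1) = 1 - 2 * (1 / (1 - ζ ^ k * q)) := by
    have hk : ζ ^ k * q ≠ 1 := fun h ↦ hq <| by
      rw [← one_pow n, ← h, mul_pow, ← pow_mul, pow_mul', hζ.pow_eq_one, one_pow, one_mul]
    have : 1 - ζ ^ k * q ≠ 0 := sub_ne_zero.mpr hk.symm
    have : ζ ^ k * q - 1 ≠ 0 := sub_ne_zero.mpr hk
    field_simp
    ring
  have : (1 : K) - q ^ n ≠ 0 := sub_ne_zero.mpr (Ne.symm hq)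
  have : q ^ n - 1 ≠ 0 := sub_ne_zero.mpr hq
  rw [sum_congr rfl fun k _ ↦ hterm k, sum_sub_distrib, ← mul_sum, hsum, sum_const, card_range,
    nsmul_one, one_pow, one_pow, mul_one, show (1 : K) - q ^ n = -(q ^ n - 1) by ring]
  field_simp
  ring

namespace Complex

theorem cot_eq_I_mul_exp_ratio (z : ℂ) :
    cot z = I * ((exp (2 * I * z) + 1) / (exp (2 * I * z) - 1)) := by
  rw [cot_eq_exp_ratio, ← div_div, div_I, ← neg_sub, div_neg]
  ring

theorem exp_two_mul_I_mul_eq_one_iff (z : ℂ) : exp (2 * I * z) = 1 ↔ sin z = 0 := by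
  rw [exp_eq_one_iff, sin_eq_zero_iff]
  refine exists_congr fun k ↦ ⟨fun h ↦ mul_left_cancel₀ (by simp : 2 * I ≠ 0) ?_, fun h ↦ ?_⟩
  · linear_combination h
  · linear_combination 2 * I * h

theorem sum_cot_add_mul_pi_div {n : ℕ} {z : ℂ} (h : sin (n * z) ≠ 0) :
    ∑ k ∈ range n, cot (z + k * π / n) = n * cot (n * z) := by
  have hn : n ≠ 0 := by rintro rfl; simp at h
  set q := exp (2 * I * z)
  have hexp (k : ℕ) : exp (2 * I * (z + k * π / n)) = exp (2 * π * I / n) ^ k * q := by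
    rw [← exp_nat_mul, ← exp_add]
    congr 1
    field_simp
    ring
  have hqn : q ^ n = exp (2 * I * (n * z)) := by
    rw [← exp_nat_mul]
    ring_nf
  have hq : q ^ n ≠ 1 := hqn ▸ (exp_two_mul_I_mul_eq_one_iff _).not.mpr h
  simp_rw [cot_eq_I_mul_exp_ratio, hexp, ← mul_sum,
    (isPrimitiveRoot_exp n hn).sum_pow_mul_add_one_div_sub_one hq, ← hqn]
  ring

end Complex

namespace Real

theorem sum_cot_add_mul_pi_div {n : ℕ} {x : ℝ} (h : sin (n * x) ≠ 0) :
    ∑ k ∈ range n, cot (x + k * π / n) = n * cot (n * x) := by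
  have hc : Complex.sin (n * x) ≠ 0 := by exact_mod_cast h
  exact_mod_cast Complex.sum_cot_add_mul_pi_div hc

theorem cot_add_nat_mul_pi (x : ℝ) (n : ℕ) : cot (x + n * π) = cot x := by
  rw [cot_eq_cos_div_sin, cot_eq_cos_div_sin, cos_add_nat_mul_pi, sin_add_nat_mul_pi,
    mul_div_mul_left _ _ (pow_ne_zero n (by norm_num))]

theorem tan_eq_neg_cot_add_pi_div_two (x : ℝ) : tan x = -cot (x + π / 2) := by
  rw [tan_eq_sin_div_cos, cot_eq_cos_div_sin, cos_add_pi_div_two, sin_add_pi_div_two, neg_div,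
    neg_neg]

end Real

theorem tan_multiple_angle_general (m : ℕ) (a t : ℝ)
    (hs : Real.sin (2 * m * a * t) ≠ 0) :
    -(2 * m * Real.cot (2 * m * a * t))
      = ∑ j ∈ Finset.range (2 * m), Real.tan (a * t + j * π / (2 * m)) := by
  have hshift : ((2 * m : ℕ) : ℝ) * (a * t + π / 2) = 2 * m * a * t + m * π := by
    push_cast
    ring
  have hsin : sin (((2 * m : ℕ) : ℝ) * (a * t + π / 2)) ≠ 0 := by
    rw [hshift, sin_add_nat_mul_pi]
    exact mul_ne_zero (pow_ne_zero m (by norm_num)) hs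
  calc -(2 * m * cot (2 * m * a * t))
      = -∑ j ∈ range (2 * m), cot (a * t + π / 2 + j * π / ((2 * m : ℕ) : ℝ)) := by
        rw [sum_cot_add_mul_pi_div hsin, hshift, cot_add_nat_mul_pi]
        push_cast
        rfl
    _ = ∑ j ∈ range (2 * m), tan (a * t + j * π / (2 * m)) := by
        rw [← sum_neg_distrib]
        refine sum_congr rfl fun j _ ↦ ?_
        rw [tan_eq_neg_cot_add_pi_div_two, add_right_comm]
        push_cast
        rfl

/-- −2m·cot(2m·a·t) = Σ_{j=0}^{2m−1} tan(a·t + jπ/(2m)). -/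
theorem tan_multiple_angle (m : ℕ) (hm : 1 ≤ m) (a t : ℝ)
    (hs : Real.sin (2 * m * a * t) ≠ 0) :
    -(2 * m * Real.cot (2 * m * a * t))
      = ∑ j ∈ Finset.range (2 * m), Real.tan (a * t + j * π / (2 * m)) :=
  tan_multiple_angle_general m a t hs
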